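/- arXiv:2503.10237 — 3 statements merged into one kernel-verified Lean document; each statement's English description precedes it below -/
import Mathlib

section
/- Tweedie's formula (one-dimensional, mean): if X_0 has a density p_0 on ℝ and X_t = α·X_0 + σ·Z with Z standard Gaussian independent of X_0 (α ≠ 0, σ > 0), then E[X_0 | X_t = x] = (x + σ²·(d/dx) log p_t(x)) / α, where p_t is the density of X_t. -/
open MeasureTheory

/-- Gaussian density on ℝ with mean `μ` and variance `v`. -/
noncomputable def gauss1 (μ v x : ℝ) : ℝ :=
  (Real.sqrt (2 * Real.pi * v))⁻¹ * Real.exp (-(x - μ) ^ 2 / (2 * v))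

/-- Tweedie's formula (one-dimensional, mean): if `X_t = α X_0 + σ Z`,
then `E[X_0 | X_t = x] = (x + σ² (log p_t)'(x)) / α`. -/
theorem stmt_7 (α σ : ℝ) (hα : α ≠ 0) (hσ : 0 < σ)
    (p0 : ℝ → ℝ) (hp0 : ∀ z, 0 ≤ p0 z) (hp0int : ∫ z, p0 z = 1)
    (pt : ℝ → ℝ)
    (hpt : ∀ x, pt x = ∫ x0, gauss1 (α * x0) (σ ^ 2) x * p0 x0)
    (hptpos : ∀ x, 0 < pt x)
    -- differentiation under the integral sign is valid:
    (hder : ∀ x, HasDerivAt pt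
      (∫ x0, ((α * x0 - x) / σ ^ 2) * (gauss1 (α * x0) (σ ^ 2) x * p0 x0)) x)
    (x : ℝ)
    (hint0 : Integrable (fun x0 => gauss1 (α * x0) (σ ^ 2) x * p0 x0))
    (hint1 : Integrable (fun x0 => x0 * (gauss1 (α * x0) (σ ^ 2) x * p0 x0))) :
    (∫ x0, x0 * (gauss1 (α * x0) (σ ^ 2) x * p0 x0)) / pt x
      = (x + σ ^ 2 * deriv (fun u => Real.log (pt u)) x) / α := by
  have hσ2 : (σ : ℝ) ^ 2 ≠ 0 := pow_ne_zero _ (ne_of_gt hσ)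
  set N := ∫ x0, x0 * (gauss1 (α * x0) (σ ^ 2) x * p0 x0) with hN
  -- compute the derivative integral
  have hD : (∫ x0, ((α * x0 - x) / σ ^ 2) * (gauss1 (α * x0) (σ ^ 2) x * p0 x0))
      = (α * N - x * pt x) / σ ^ 2 := by
    have h1 : (fun x0 => ((α * x0 - x) / σ ^ 2) * (gauss1 (α * x0) (σ ^ 2) x * p0 x0))
        = fun x0 => (α / σ ^ 2) * (x0 * (gauss1 (α * x0) (σ ^ 2) x * p0 x0))
          - (x / σ ^ 2) * (gauss1 (α * x0) (σ ^ 2) x * p0 x0) := by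
      funext x0; ring
    rw [h1, integral_sub (hint1.const_mul _) (hint0.const_mul _),
      integral_const_mul, integral_const_mul, ← hN, ← hpt]
    field_simp
  have hptne : pt x ≠ 0 := ne_of_gt (hptpos x)
  have hlog : HasDerivAt (fun u => Real.log (pt u))
      (((α * N - x * pt x) / σ ^ 2) / pt x) x := by
    have := (hder x).log hptne
    rwa [hD] at this
  rw [hlog.deriv]
  field_simp
  ring
end

section
/- Tweedie's formula (one-dimensional, variance): under the same setup, Var[X_0 | X_t = x] = (σ²/α²)·(1 + σ²·(d²/dx²) log p_t(x)). -/
open MeasureTheory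

/-- Tweedie's formula (one-dimensional, variance): if `X_t = α X_0 + σ Z`,
then `Var[X_0 | X_t = x] = (σ²/α²)(1 + σ² (log p_t)''(x))`. -/
theorem stmt_8 (α σ : ℝ) (hα : α ≠ 0) (hσ : 0 < σ)
    (p0 : ℝ → ℝ) (hp0 : ∀ z, 0 ≤ p0 z) (hp0int : ∫ z, p0 z = 1)
    (pt pt' : ℝ → ℝ)
    (hpt : ∀ x, pt x = ∫ x0, gauss1 (α * x0) (σ ^ 2) x * p0 x0)
    (hptpos : ∀ x, 0 < pt x)
    -- first differentiation under the integral sign: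
    (hpt' : ∀ x, pt' x = ∫ x0, ((α * x0 - x) / σ ^ 2) * (gauss1 (α * x0) (σ ^ 2) x * p0 x0))
    (hder1 : ∀ x, HasDerivAt pt (pt' x) x)
    -- second differentiation under the integral sign:
    (x : ℝ)
    (hder2 : HasDerivAt pt'
      (∫ x0, (((α * x0 - x) / σ ^ 2) ^ 2 - 1 / σ ^ 2) * (gauss1 (α * x0) (σ ^ 2) x * p0 x0)) x)
    (hint0 : Integrable (fun x0 => gauss1 (α * x0) (σ ^ 2) x * p0 x0))
    (hint1 : Integrable (fun x0 => x0 * (gauss1 (α * x0) (σ ^ 2) x * p0 x0)))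
    (hint2 : Integrable (fun x0 => x0 ^ 2 * (gauss1 (α * x0) (σ ^ 2) x * p0 x0))) :
    (∫ x0, x0 ^ 2 * (gauss1 (α * x0) (σ ^ 2) x * p0 x0)) / pt x
        - ((∫ x0, x0 * (gauss1 (α * x0) (σ ^ 2) x * p0 x0)) / pt x) ^ 2
      = (σ ^ 2 / α ^ 2) *
          (1 + σ ^ 2 * deriv (fun u => deriv (fun v => Real.log (pt v)) u) x) := by
  have hσ2 : (σ : ℝ) ^ 2 ≠ 0 := pow_ne_zero 2 (ne_of_gt hσ)
  set g : ℝ → ℝ := fun x0 => gauss1 (α * x0) (σ ^ 2) x * p0 x0 with hg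
  set m0 : ℝ := ∫ x0, g x0 with hm0
  set m1 : ℝ := ∫ x0, x0 * g x0 with hm1
  set m2 : ℝ := ∫ x0, x0 ^ 2 * g x0 with hm2
  have hptx : pt x = m0 := hpt x
  have hm0pos : 0 < m0 := hptx ▸ hptpos x
  -- first derivative value
  have h1 : pt' x = (α * m1 - x * m0) / σ ^ 2 := by
    rw [hpt' x]
    have : (fun x0 => ((α * x0 - x) / σ ^ 2) * g x0)
        = fun x0 => (α / σ ^ 2) * (x0 * g x0) - (x / σ ^ 2) * g x0 := by
      funext x0; field_simp
    rw [this, integral_sub (hint1.const_mul _) (hint0.const_mul _),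
      integral_const_mul, integral_const_mul]
    rw [← hm0, ← hm1]; field_simp
  -- second derivative value
  have h2 : HasDerivAt pt' ((α ^ 2 * m2 - 2 * α * x * m1 + x ^ 2 * m0 - σ ^ 2 * m0) / σ ^ 4) x := by
    convert hder2 using 1
    have : (fun x0 => (((α * x0 - x) / σ ^ 2) ^ 2 - 1 / σ ^ 2) * g x0)
        = fun x0 => (α ^ 2 / σ ^ 4) * (x0 ^ 2 * g x0)
            - (2 * α * x / σ ^ 4) * (x0 * g x0)
            + ((x ^ 2 - σ ^ 2) / σ ^ 4) * g x0 := by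
      funext x0; field_simp; ring
    have A := integral_add (μ := volume)
      (((hint2.const_mul (α ^ 2 / σ ^ 4)).sub (hint1.const_mul (2 * α * x / σ ^ 4)) :
        Integrable fun x0 => α ^ 2 / σ ^ 4 * (x0 ^ 2 * g x0)
          - 2 * α * x / σ ^ 4 * (x0 * g x0)))
      (hint0.const_mul ((x ^ 2 - σ ^ 2) / σ ^ 4))
    rw [this, A, integral_sub (hint2.const_mul _) (hint1.const_mul _),
      integral_const_mul, integral_const_mul, integral_const_mul]
    rw [← hm0, ← hm1, ← hm2]; field_simp; ring
  -- log derivative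
  have hlog : ∀ u, deriv (fun v => Real.log (pt v)) u = pt' u / pt u := fun u =>
    ((hder1 u).log (ne_of_gt (hptpos u))).deriv
  have hquot : HasDerivAt (fun u => pt' u / pt u)
      (((α ^ 2 * m2 - 2 * α * x * m1 + x ^ 2 * m0 - σ ^ 2 * m0) / σ ^ 4 * pt x
        - pt' x * pt' x) / (pt x) ^ 2) x := h2.div (hder1 x) (ne_of_gt (hptpos x))
  have hd2 : deriv (fun u => deriv (fun v => Real.log (pt v)) u) x
      = ((α ^ 2 * m2 - 2 * α * x * m1 + x ^ 2 * m0 - σ ^ 2 * m0) / σ ^ 4 * pt x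
        - pt' x * pt' x) / (pt x) ^ 2 := by
    have : (fun u => deriv (fun v => Real.log (pt v)) u) = fun u => pt' u / pt u :=
      funext hlog
    rw [this, hquot.deriv]
  show m2 / pt x - (m1 / pt x) ^ 2 = _
  rw [hd2, hptx, h1]
  field_simp
  ring
end

section
/- Conditional-score identity: suppose (x_0, y, x_t) has joint density p(x_0)·p(y|x_0)·p(x_t|x_0) with p(x_t|x_0) = N(x_t; α_t x_0, σ_t² I). Then E[x_0 | x_t, y] = E[x_0 | x_t] + (σ_t²/α_t)·∇_{x_t} log p(y|x_t), where p(y|x_t) = ∫ p(y|x_0) p(x_0|x_t) dx_0. -/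
/-!
Tweedie's formula: since `∇ₓ N(x; α x₀, σ² I) = σ⁻² (α x₀ - x) N(x; α x₀, σ² I)`, differentiating
under the integral gives `σ² ∇ log p(x_t) = α E[x₀ | x_t] - x_t`, and likewise
`σ² ∇ log p(y, x_t) = α E[x₀ | x_t, y] - x_t`. Subtracting, `x_t` cancels and
`∇ log p(y, x_t) - ∇ log p(x_t) = ∇ log p(y | x_t)`.
-/

open MeasureTheory

section Gradient

variable {𝕜 F : Type*} [RCLike 𝕜] [NormedAddCommGroup F] [InnerProductSpace 𝕜 F] [CompleteSpace F]
  {f g : F → 𝕜} {x : F}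

theorem gradient_fun_sub (hf : DifferentiableAt 𝕜 f x) (hg : DifferentiableAt 𝕜 g x) :
    gradient (fun u => f u - g u) x = gradient f x - gradient g x := by
  simp only [gradient, fderiv_fun_sub hf hg, map_sub]

end Gradient

variable {E : Type*} [NormedAddCommGroup E] [InnerProductSpace ℝ E] [CompleteSpace E]
  {f g : E → ℝ} {f' : E} {x : E}

theorem HasGradientAt.log (hf : HasGradientAt f f' x) (hx : f x ≠ 0) :
    HasGradientAt (fun u => Real.log (f u)) ((f x)⁻¹ • f') x := by
  rw [hasGradientAt_iff_hasFDerivAt] at hf ⊢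
  simpa only [map_smul] using hf.log hx

theorem gradient_log_div (hf : DifferentiableAt ℝ f x) (hg : DifferentiableAt ℝ g x)
    (hfx : f x ≠ 0) (hgx : g x ≠ 0) :
    gradient (fun u => Real.log (f u / g u)) x
      = gradient (fun u => Real.log (f u)) x - gradient (fun u => Real.log (g u)) x := by
  have hlog_div : (fun u => Real.log (f u / g u)) =ᶠ[nhds x]
      fun u => Real.log (f u) - Real.log (g u) := by
    filter_upwards [hf.continuousAt.eventually_ne hfx, hg.continuousAt.eventually_ne hgx]
      with u hfu hgu using Real.log_div hfu hgu
  rw [hlog_div.gradient_eq, gradient_fun_sub (hf.log hfx) (hg.log hgx)]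

theorem tweedie_formula [MeasurableSpace E] {μ : Measure E} {w G : E → ℝ} {α σ : ℝ}
    (hα : α ≠ 0) (hσ : σ ≠ 0)
    (hG : HasGradientAt G ((σ ^ 2)⁻¹ • ((∫ x0, w x0 • (α • x0) ∂μ) - G x • x)) x)
    (hGx : G x ≠ 0) :
    (G x)⁻¹ • ∫ x0, w x0 • x0 ∂μ
      = α⁻¹ • x + (σ ^ 2 / α) • gradient (fun u => Real.log (G u)) x := by
  have hpull : ∫ x0, w x0 • (α • x0) ∂μ = α • ∫ x0, w x0 • x0 ∂μ := by
    simp only [smul_comm _ α, integral_smul]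
  rw [(hG.log hGx).gradient, hpull]
  simp only [smul_sub, smul_smul]
  field_simp
  abel

/-- `K` is the Gaussian transition kernel `p(x_t|x_0) = N(x_t; α_t x_0, σ_t² I)`,
`L x_0 = p(y|x_0)` (with `y` fixed), `P x_t = p(x_t)` and `G x_t = p(y, x_t)`,
so that `p(y|x_t) = G x_t / P x_t`. -/
theorem stmt_9_general {n : ℕ} (αt σt : ℝ) (hα : αt ≠ 0) (hσ : 0 < σt)
    (p0 L : EuclideanSpace ℝ (Fin n) → ℝ)
    (K : EuclideanSpace ℝ (Fin n) → EuclideanSpace ℝ (Fin n) → ℝ)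
    (G P : EuclideanSpace ℝ (Fin n) → ℝ)
    (xt : EuclideanSpace ℝ (Fin n)) (hGpos : 0 < G xt) (hPpos : 0 < P xt)
    -- differentiation under the integral sign is valid for both integrals:
    (hGgrad : HasGradientAt G ((σt ^ 2)⁻¹ •
      ((∫ x0, (L x0 * K xt x0 * p0 x0) • (αt • x0)) - G xt • xt)) xt)
    (hPgrad : HasGradientAt P ((σt ^ 2)⁻¹ •
      ((∫ x0, (K xt x0 * p0 x0) • (αt • x0)) - P xt • xt)) xt) :
    (G xt)⁻¹ • (∫ x0, (L x0 * K xt x0 * p0 x0) • x0)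
      = (P xt)⁻¹ • (∫ x0, (K xt x0 * p0 x0) • x0)
        + (σt ^ 2 / αt) • gradient (fun u => Real.log (G u / P u)) xt := by
  rw [tweedie_formula hα hσ.ne' hGgrad hGpos.ne', tweedie_formula hα hσ.ne' hPgrad hPpos.ne',
    gradient_log_div hGgrad.differentiableAt hPgrad.differentiableAt hGpos.ne' hPpos.ne',
    smul_sub]
  abel

/-- Conditional-score identity:
`E[x_0 | x_t, y] = E[x_0 | x_t] + (σ_t²/α_t)·∇_{x_t} log p(y|x_t)`,
where `K` is the Gaussian transition kernel `p(x_t|x_0) = N(x_t; α_t x_0, σ_t² I)`,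
`L x_0 = p(y|x_0)` (with `y` fixed), `P x_t = p(x_t)` and `G x_t = p(y, x_t)`,
so that `p(y|x_t) = G x_t / P x_t`. -/
theorem stmt_9 {n : ℕ} (αt σt : ℝ) (hα : αt ≠ 0) (hσ : 0 < σt)
    (p0 L : EuclideanSpace ℝ (Fin n) → ℝ)
    (hp0 : ∀ z, 0 ≤ p0 z) (hL : ∀ z, 0 ≤ L z)
    (K : EuclideanSpace ℝ (Fin n) → EuclideanSpace ℝ (Fin n) → ℝ)
    (hK : ∀ xt x0, K xt x0 =
      (2 * Real.pi * σt ^ 2) ^ (-(n : ℝ) / 2) *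
        Real.exp (-‖xt - αt • x0‖ ^ 2 / (2 * σt ^ 2)))
    (G P : EuclideanSpace ℝ (Fin n) → ℝ)
    (hG : ∀ u, G u = ∫ x0, L x0 * K u x0 * p0 x0)
    (hP : ∀ u, P u = ∫ x0, K u x0 * p0 x0)
    (xt : EuclideanSpace ℝ (Fin n)) (hGpos : 0 < G xt) (hPpos : 0 < P xt)
    -- differentiation under the integral sign is valid for both integrals:
    (hGgrad : HasGradientAt G ((σt ^ 2)⁻¹ •
      ((∫ x0, (L x0 * K xt x0 * p0 x0) • (αt • x0)) - G xt • xt)) xt)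
    (hPgrad : HasGradientAt P ((σt ^ 2)⁻¹ •
      ((∫ x0, (K xt x0 * p0 x0) • (αt • x0)) - P xt • xt)) xt)
    (hintG : Integrable (fun x0 => (L x0 * K xt x0 * p0 x0) • x0))
    (hintP : Integrable (fun x0 => (K xt x0 * p0 x0) • x0)) :
    (G xt)⁻¹ • (∫ x0, (L x0 * K xt x0 * p0 x0) • x0)
      = (P xt)⁻¹ • (∫ x0, (K xt x0 * p0 x0) • x0)
        + (σt ^ 2 / αt) • gradient (fun u => Real.log (G u / P u)) xt :=
  stmt_9_general αt σt hα hσ p0 L K G P xt hGpos hPpos hGgrad hPgrad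
end
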